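/- Let γ ∈ (0, 1) and μ ≠ 0 be real numbers, and T > 0. The function a(t) = [((γ - 1) + exp(μ(C₂ - t)/(1 - γ))) / μ]^(1-γ), where C₂ = ((1-γ)/μ) · log(1 - γ) + T, satisfies a(T) = 0 and solves the Bernoulli ODE a'(t) + (1 - γ) · a(t)^(γ/(γ-1)) + μ · a(t) = 0 on any interval where (γ - 1 + exp(μ(C₂ - t)/(1-γ)))/μ > 0. -/

import Mathlib

/-!
The substitution `a = b ^ (1 - γ)` turns the Bernoulli equation
`a' + (1 - γ) a ^ (γ / (γ - 1)) + μ a = 0` into the linear equation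
`(1 - γ) b' + μ b + (1 - γ) = 0`, whose solutions are `(γ - 1 + e ^ (μ (C - t) / (1 - γ))) / μ`.
The choice of `C₂` makes this base vanish at `t = T`.
-/

open Real

noncomputable def linearSolution (γ μ C t : ℝ) : ℝ :=
  ((γ - 1) + exp (μ * (C - t) / (1 - γ))) / μ

theorem hasDerivAt_linearSolution {γ μ : ℝ} (hγ : γ ≠ 1) (hμ : μ ≠ 0) (C t : ℝ) :
    HasDerivAt (linearSolution γ μ C) (-(1 + μ * linearSolution γ μ C t / (1 - γ))) t := by
  have h1γ : 1 - γ ≠ 0 := sub_ne_zero.mpr hγ.symm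
  have hexp : HasDerivAt (fun s => exp (μ * (C - s) / (1 - γ)))
      (exp (μ * (C - t) / (1 - γ)) * (μ * (0 - 1) / (1 - γ))) t :=
    ((((hasDerivAt_const t C).sub (hasDerivAt_id t)).const_mul μ).div_const (1 - γ)).exp
  refine ((hexp.const_add (γ - 1)).div_const μ).congr_deriv ?_
  rw [linearSolution]
  field_simp
  ring

theorem linearSolution_eq_zero {γ μ : ℝ} (hγ : γ < 1) (hμ : μ ≠ 0) (T : ℝ) :
    linearSolution γ μ ((1 - γ) / μ * log (1 - γ) + T) T = 0 := by
  have h1γ : 0 < 1 - γ := sub_pos.mpr hγ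
  have harg : μ * ((1 - γ) / μ * log (1 - γ) + T - T) / (1 - γ) = log (1 - γ) := by
    field_simp
    ring
  rw [linearSolution, harg, exp_log h1γ]
  ring

theorem HasDerivAt.rpow_one_sub_of_linear {b : ℝ → ℝ} {γ μ t : ℝ} (hγ : γ ≠ 1) (hb : 0 < b t)
    (hb' : HasDerivAt b (-(1 + μ * b t / (1 - γ))) t) :
    HasDerivAt (fun s => b s ^ (1 - γ))
      (-((1 - γ) * (b t ^ (1 - γ)) ^ (γ / (γ - 1)) + μ * b t ^ (1 - γ))) t := by
  have h1γ : 1 - γ ≠ 0 := sub_ne_zero.mpr hγ.symm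
  have hpow : (b t ^ (1 - γ)) ^ (γ / (γ - 1)) = b t ^ (-γ) := by
    rw [← rpow_mul hb.le]
    congr 1
    field_simp [sub_ne_zero.mpr hγ]
    ring
  have hsplit : b t ^ (1 - γ) = b t * b t ^ (-γ) := by
    rw [sub_eq_add_neg, rpow_add hb, rpow_one]
  convert hb'.rpow_const (p := 1 - γ) (Or.inl hb.ne') using 1
  rw [hpow, hsplit, sub_sub_cancel_left]
  field_simp

theorem stmt_4_general (γ μ T C₂ : ℝ) (hγ : γ ∈ Set.Ioo (0 : ℝ) 1) (hμ : μ ≠ 0)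
    (hC₂ : C₂ = (1 - γ) / μ * Real.log (1 - γ) + T)
    (a : ℝ → ℝ)
    (ha : ∀ t, a t = (((γ - 1) + Real.exp (μ * (C₂ - t) / (1 - γ))) / μ) ^ (1 - γ)) :
    a T = 0 ∧
    ∀ t : ℝ, 0 < ((γ - 1) + Real.exp (μ * (C₂ - t) / (1 - γ))) / μ →
      HasDerivAt a (-((1 - γ) * a t ^ (γ / (γ - 1)) + μ * a t)) t := by
  have hγ1 : γ ≠ 1 := hγ.2.ne
  have ha' : a = fun t => linearSolution γ μ C₂ t ^ (1 - γ) := funext ha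
  refine ⟨?_, fun t hb => ?_⟩
  · rw [ha, ← linearSolution, hC₂, linearSolution_eq_zero hγ.2 hμ,
      zero_rpow (sub_ne_zero.mpr hγ1.symm)]
  · rw [ha']
    exact (hasDerivAt_linearSolution hγ1 hμ C₂ t).rpow_one_sub_of_linear hγ1 hb

/-- The function `a(t) = [((γ-1) + e^{μ(C₂-t)/(1-γ)})/μ]^{1-γ}` with
`C₂ = ((1-γ)/μ) log(1-γ) + T` satisfies `a(T) = 0` and the Bernoulli ODE
`a' + (1-γ) a^{γ/(γ-1)} + μ a = 0` wherever the base is positive. -/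
theorem stmt_4 (γ μ T C₂ : ℝ) (hγ : γ ∈ Set.Ioo (0 : ℝ) 1) (hμ : μ ≠ 0) (hT : 0 < T)
    (hC₂ : C₂ = (1 - γ) / μ * Real.log (1 - γ) + T)
    (a : ℝ → ℝ)
    (ha : ∀ t, a t = (((γ - 1) + Real.exp (μ * (C₂ - t) / (1 - γ))) / μ) ^ (1 - γ)) :
    a T = 0 ∧
    ∀ t : ℝ, 0 < ((γ - 1) + Real.exp (μ * (C₂ - t) / (1 - γ))) / μ →
      HasDerivAt a (-((1 - γ) * a t ^ (γ / (γ - 1)) + μ * a t)) t :=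
  stmt_4_general γ μ T C₂ hγ hμ hC₂ a ha
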